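/- Let λ ∈ ℝ with λ ≠ 0 and let v₀,…,v₈ be the D2Q9 velocities. For α ∈ ℝ let M_α be the 9×9 matrix with entries (M_α)_{kj} = P_k(vⱼ), where (P₀,…,P₈) are the polynomials 1, X, Y, X²+Y², X²−Y², XY, X(αX²+Y²), Y(X²+αY²), (α/2)(X⁴+Y⁴)+X²Y². Let D = diag(0, 0, 0, s₃, s₄, s₅, s₆, s₇, s₈) with s₃ = s₈. Then for all α, α′ ∈ ℝ and every g ∈ ℝ⁹ with Σⱼ g_j = 0 and Σⱼ vⱼ g_j = 0, one has M_α⁻¹ D M_α g = M_{α′}⁻¹ D M_{α′} g. In particular, the relaxation phase of the d'Humičres scheme (relative velocity ũ = 0) with these moments is independent of α. -/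

import Mathlib

/-- x-components of the D2Q9 velocities. -/
def vx (lam : ℝ) : Fin 9 → ℝ := ![0, lam, 0, -lam, 0, lam, -lam, -lam, lam]

/-- y-components of the D2Q9 velocities. -/
def vy (lam : ℝ) : Fin 9 → ℝ := ![0, 0, lam, 0, -lam, lam, lam, -lam, -lam]

/-- The moment polynomials `1, X, Y, X²+Y², X²−Y², XY, X(αX²+Y²), Y(X²+αY²),
(α/2)(X⁴+Y⁴)+X²Y²` evaluated at `(x, y)`. -/
noncomputable def P (α x y : ℝ) : Fin 9 → ℝ :=
  ![1, x, y, x ^ 2 + y ^ 2, x ^ 2 - y ^ 2, x * y,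
    x * (α * x ^ 2 + y ^ 2), y * (x ^ 2 + α * y ^ 2),
    α / 2 * (x ^ 4 + y ^ 4) + x ^ 2 * y ^ 2]

/-- The moment matrix `(M_α)_{kj} = P_k(v_j)` of the d'Humières scheme (ũ = 0). -/
noncomputable def Mmat (lam α : ℝ) : Matrix (Fin 9) (Fin 9) ℝ :=
  fun k j => P α (vx lam j) (vy lam j) k

section ConsEval
variable {γ : Type*} (a0 a1 a2 a3 a4 a5 a6 a7 a8 : γ)
lemma cons9_5o : ![a0,a1,a2,a3,a4,a5,a6,a7,a8] (5 : Fin 9) = a5 := rfl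
lemma cons9_6o : ![a0,a1,a2,a3,a4,a5,a6,a7,a8] (6 : Fin 9) = a6 := rfl
lemma cons9_7o : ![a0,a1,a2,a3,a4,a5,a6,a7,a8] (7 : Fin 9) = a7 := rfl
lemma cons9_8o : ![a0,a1,a2,a3,a4,a5,a6,a7,a8] (8 : Fin 9) = a8 := rfl
end ConsEval

attribute [local simp] cons9_5o cons9_6o cons9_7o cons9_8o

/-- The shear matrix relating `M_α` to `M_0`. -/
noncomputable def Amat (lam α : ℝ) : Matrix (Fin 9) (Fin 9) ℝ :=
  1 + Matrix.single 6 1 (α*lam^2) + Matrix.single 7 2 (α*lam^2)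
    + Matrix.single 8 3 (α*lam^2/2)

lemma Amat_mul (lam α : ℝ) : Amat lam α * Amat lam (-α) = 1 := by
  simp [Amat, add_mul, mul_add, Matrix.single_mul_single_of_ne, ← Matrix.single_add]
  ext i j
  simp [Matrix.single, Matrix.one_apply]
  split_ifs <;> simp_all <;> ring

lemma stdBasis_mul_apply (i l k j : Fin 9) (a : ℝ) (M : Matrix (Fin 9) (Fin 9) ℝ) :
    (Matrix.single i l a * M) k j = if k = i then a * M l j else 0 := by
  simp [Matrix.mul_apply, Matrix.single, ite_and, Finset.sum_ite_eq, eq_comm]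

lemma stdBasis_mulVec (i l k : Fin 9) (a : ℝ) (w : Fin 9 → ℝ) :
    (Matrix.single i l a).mulVec w k = if k = i then a * w l else 0 := by
  simp [Matrix.mulVec, dotProduct, Matrix.single, ite_and,
    Finset.sum_ite_eq, eq_comm]

lemma hx3 (lam : ℝ) (j : Fin 9) : (vx lam j)^3 = lam^2 * vx lam j := by
  fin_cases j <;> simp [vx] <;> ring

lemma hy3 (lam : ℝ) (j : Fin 9) : (vy lam j)^3 = lam^2 * vy lam j := by
  fin_cases j <;> simp [vy] <;> ring

lemma hx4 (lam : ℝ) (j : Fin 9) : (vx lam j)^4 = lam^2 * (vx lam j)^2 := by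
  fin_cases j <;> simp [vx] <;> ring

lemma hy4 (lam : ℝ) (j : Fin 9) : (vy lam j)^4 = lam^2 * (vy lam j)^2 := by
  fin_cases j <;> simp [vy] <;> ring

lemma Mmat_fact (lam α : ℝ) : Mmat lam α = Amat lam α * Mmat lam 0 := by
  ext k j
  rw [Amat, Matrix.add_mul, Matrix.add_mul, Matrix.add_mul, Matrix.one_mul,
    Matrix.add_apply, Matrix.add_apply, Matrix.add_apply,
    stdBasis_mul_apply, stdBasis_mul_apply, stdBasis_mul_apply]
  fin_cases k <;> simp [Mmat, P]
  · linear_combination α * hx3 lam j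
  · linear_combination α * hy3 lam j
  · linear_combination (α/2) * hx4 lam j + (α/2) * hy4 lam j

lemma key (lam β : ℝ) (s : Fin 9 → ℝ) (w : Fin 9 → ℝ) (hs38 : s 3 = s 8)
    (h1 : w 1 = 0) (h2 : w 2 = 0) :
    (Amat lam (-β)).mulVec ((Matrix.diagonal s).mulVec ((Amat lam β).mulVec w))
      = (Matrix.diagonal s).mulVec w := by
  have hA : ∀ (γ : ℝ) (v : Fin 9 → ℝ), (Amat lam γ).mulVec v = fun k =>
      v k + ((if k = 6 then γ*lam^2 * v 1 else 0) + (if k = 7 then γ*lam^2 * v 2 else 0)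
        + (if k = 8 then γ*lam^2/2 * v 3 else 0)) := by
    intro γ v
    funext k
    simp [Amat, Matrix.add_mulVec, stdBasis_mulVec, add_assoc]
  have hD : ∀ v : Fin 9 → ℝ, (Matrix.diagonal s).mulVec v = fun k => s k * v k := by
    intro v; funext k; simp [Matrix.mulVec_diagonal]
  rw [hA, hD, hA, hD]
  funext i
  fin_cases i <;> simp [h1, h2] <;> rw [hs38] <;> ring

/-- The relaxation operator of the d'Humières scheme (relative velocity ũ = 0)
with the moments `1, X, Y, X²+Y², X²−Y², XY, X(αX²+Y²), Y(X²+αY²),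
(α/2)(X⁴+Y⁴)+X²Y²` is independent of `α` on vectors with zero density and
momentum, provided the moments `X²+Y²` and the fourth-order one share the same
relaxation parameter (`s 3 = s 8`). -/
theorem stmt_8 (lam : ℝ) (hlam : lam ≠ 0)
    (s : Fin 9 → ℝ) (hs0 : s 0 = 0) (hs1 : s 1 = 0) (hs2 : s 2 = 0)
    (hs38 : s 3 = s 8) (α α' : ℝ)
    (g : Fin 9 → ℝ) (hg : ∑ j, g j = 0)
    (hgx : ∑ j, vx lam j * g j = 0) (hgy : ∑ j, vy lam j * g j = 0) :
    ((Mmat lam α)⁻¹ * Matrix.diagonal s * Mmat lam α).mulVec g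
      = ((Mmat lam α')⁻¹ * Matrix.diagonal s * Mmat lam α').mulVec g := by
  have hrow1 : Mmat lam 0 1 = vx lam := by funext j; rfl
  have hrow2 : Mmat lam 0 2 = vy lam := by funext j; rfl
  have hw1 : (Mmat lam 0).mulVec g 1 = 0 := by
    simpa [Matrix.mulVec, dotProduct, hrow1] using hgx
  have hw2 : (Mmat lam 0).mulVec g 2 = 0 := by
    simpa [Matrix.mulVec, dotProduct, hrow2] using hgy
  have main : ∀ β : ℝ, ((Mmat lam β)⁻¹ * Matrix.diagonal s * Mmat lam β).mulVec g
      = (Mmat lam 0)⁻¹.mulVec ((Matrix.diagonal s).mulVec ((Mmat lam 0).mulVec g)) := by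
    intro β
    have hAinv : (Amat lam β)⁻¹ = Amat lam (-β) :=
      Matrix.inv_eq_right_inv (Amat_mul lam β)
    rw [Mmat_fact lam β, Matrix.mul_inv_rev, hAinv]
    simp only [← Matrix.mulVec_mulVec]
    rw [key lam β s _ hs38 hw1 hw2]
  rw [main α, main α']
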